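/- Let Γ be a nonempty parameter-bounded family of Hénon-form maps, and let R > 1 and ρ > 1 be such that every h ∈ Γ satisfies condition (A) for (R, ρ). For γ ∈ Γ^ℤ let G_γ⁺ be the pointwise limit of G_{γ,n}⁺ on ℂ² (which exists). Then: (1) for every γ ∈ Γ^ℤ and every z ∈ ℂ², G_γ⁺(z) = (deg γ₀)⁻¹ · G_{σ(γ)}⁺(γ₀(z)); and (2) for every γ ∈ Γ^ℤ there exist a constant r_γ⁺ ∈ ℝ and a bounded continuous function u_γ⁺ : V_R⁺ → ℝ such that G_γ⁺(x,y) = log|y| + r_γ⁺ + u_γ⁺(x,y) for all (x,y) ∈ V_R⁺, and for every ε > 0 there exists T > 0 such that |u_γ⁺(x,y)| < ε whenever (x,y) ∈ V_R⁺ and |y| > T. -/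

import Mathlib

open Complex Filter Set Topology MeasureTheory Bornology

noncomputable section

/-- A Hénon-form map `f(x,y) = (y + a, p(y) - δ x)` with `δ ≠ 0` and `deg p ≥ 2`. -/
structure HenonMap : Type where
  a : ℂ
  δ : ℂ
  p : Polynomial ℂ
  hδ : δ ≠ 0
  hdeg : 2 ≤ p.natDegree

namespace HenonMap

/-- The map itself. -/
def toFun (f : HenonMap) (z : ℂ × ℂ) : ℂ × ℂ :=
  (z.2 + f.a, f.p.eval z.2 - f.δ * z.1)

/-- The inverse map `f⁻¹(x,y) = (δ⁻¹ (p(x - a) - y), x - a)`. -/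
def invFun (f : HenonMap) (z : ℂ × ℂ) : ℂ × ℂ :=
  (f.δ⁻¹ * (f.p.eval (z.1 - f.a) - z.2), z.1 - f.a)

end HenonMap

/-- `V_R⁺ = {(x,y) : max(R,|x|) < |y|}`. -/
def VPlus (R : ℝ) : Set (ℂ × ℂ) := {z | max R (‖z.1‖) < ‖z.2‖}

/-- `V_R⁻ = {(x,y) : max(R,|y|) < |x|}`. -/
def VMinus (R : ℝ) : Set (ℂ × ℂ) := {z | max R (‖z.2‖) < ‖z.1‖}

/-- `D_R = {(x,y) : max(|x|,|y|) < R}`. -/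
def DDisk (R : ℝ) : Set (ℂ × ℂ) := {z | max (‖z.1‖) (‖z.2‖) < R}

/-- Condition (A) for `(R, ρ)`. -/
def CondA (f : HenonMap) (R ρ : ℝ) : Prop :=
  (∀ z ∈ closure (VPlus R),
    f.toFun z ∈ VPlus R ∧ ρ * ‖z.2‖ < ‖(f.toFun z).2‖) ∧
  (∀ z ∈ closure (VMinus R),
    f.invFun z ∈ VMinus R ∧ ρ * ‖z.1‖ < ‖(f.invFun z).1‖)

/-- A parameter-bounded family of Hénon-form maps. -/
def ParamBounded (Γ : Set HenonMap) : Prop :=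
  ∃ (D : ℕ) (A d₀ Δ m M : ℝ),
    2 ≤ D ∧ 0 ≤ A ∧ 0 < d₀ ∧ d₀ ≤ Δ ∧ 0 < m ∧ m ≤ M ∧
    ∀ f ∈ Γ,
      f.p.natDegree ≤ D ∧ ‖f.a‖ ≤ A ∧
      d₀ ≤ ‖f.δ‖ ∧ ‖f.δ‖ ≤ Δ ∧
      (∀ i : ℕ, ‖(f.p.coeff i)‖ ≤ M) ∧
      m ≤ ‖f.p.leadingCoeff‖

/-- Forward composition: `fwd γ n = γ_{n-1} ∘ ⋯ ∘ γ₀`. -/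
def fwd (γ : ℤ → HenonMap) : ℕ → (ℂ × ℂ) → ℂ × ℂ
  | 0 => id
  | n + 1 => fun z => (γ (n : ℤ)).toFun (fwd γ n z)

/-- Backward composition: `bwd γ n = γ_{-n}⁻¹ ∘ ⋯ ∘ γ_{-1}⁻¹`. -/
def bwd (γ : ℤ → HenonMap) : ℕ → (ℂ × ℂ) → ℂ × ℂ
  | 0 => id
  | n + 1 => fun z => (γ (-((n : ℤ) + 1))).invFun (bwd γ n z)

/-- `K_γ⁺` : points with bounded forward orbit. -/
def KPlus (γ : ℤ → HenonMap) : Set (ℂ × ℂ) :=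
  {z | IsBounded (Set.range fun n : ℕ => fwd γ n z)}

/-- `K_γ⁻` : points with bounded backward orbit. -/
def KMinus (γ : ℤ → HenonMap) : Set (ℂ × ℂ) :=
  {z | IsBounded (Set.range fun n : ℕ => bwd γ n z)}

/-- `I_γ⁺` : points whose forward orbit tends to infinity in norm. -/
def IPlus (γ : ℤ → HenonMap) : Set (ℂ × ℂ) :=
  {z | Tendsto (fun n : ℕ => ‖fwd γ n z‖) atTop atTop}

/-- `I_γ⁻` : points whose backward orbit tends to infinity in norm. -/
def IMinus (γ : ℤ → HenonMap) : Set (ℂ × ℂ) :=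
  {z | Tendsto (fun n : ℕ => ‖bwd γ n z‖) atTop atTop}

/-- The iterated shift: `(σⁿ γ)_j = γ_{j+n}`. -/
def shiftIter (γ : ℤ → HenonMap) (n : ℕ) : ℤ → HenonMap := fun j => γ (j + n)

/-- `log⁺ t = max (log t) 0`. -/
def logPlus (t : ℝ) : ℝ := max (Real.log t) 0

/-- `G_{γ,n}⁺(z) = (deg γ_{n-1} ⋯ deg γ₀)⁻¹ log⁺ ‖γ_{n-1} ∘ ⋯ ∘ γ₀ (z)‖`. -/
def GPlusN (γ : ℤ → HenonMap) (n : ℕ) (z : ℂ × ℂ) : ℝ :=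
  (∏ j ∈ Finset.range n, ((γ (j : ℤ)).p.natDegree : ℝ))⁻¹ * logPlus ‖fwd γ n z‖

/-- `G_{γ,n}⁻(z) = (deg γ_{-1} ⋯ deg γ_{-n})⁻¹ log⁺ ‖γ_{-n}⁻¹ ∘ ⋯ ∘ γ_{-1}⁻¹ (z)‖`. -/
def GMinusN (γ : ℤ → HenonMap) (n : ℕ) (z : ℂ × ℂ) : ℝ :=
  (∏ j ∈ Finset.range n, ((γ (-((j : ℤ) + 1))).p.natDegree : ℝ))⁻¹ * logPlus ‖bwd γ n z‖

/-! On `V_R⁺` the forward orbit stays in `V_R⁺` with `|yₙ|` increasing, so there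
`G_{γ,n}⁺ = Pₙ⁻¹ log|yₙ|` with `Pₙ = deg γ₀ ⋯ deg γ_{n-1} ≥ 2ⁿ`. Uniformly over a
parameter-bounded family, `π₂ γₖ(x, y) = cₖ y^{dₖ} (1 + O(1/|y|))` when `|x| ≤ |y|`, so
`log|y_{k+1}| = dₖ log|yₖ| + log|cₖ| + O(1/|yₖ|)`. Telescoping,
`G_γ⁺ = log|y| + Σₖ P_{k+1}⁻¹ log|cₖ| + Σₖ P_{k+1}⁻¹ O(1/|yₖ|)`: the first series is the
constant `r_γ⁺`, the second a uniformly convergent series of continuous functions, bounded by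
`O(1/|y|)`, which is `u_γ⁺`. The functional equation is the limit of
`G_{γ,n+1}⁺ = (deg γ₀)⁻¹ G_{σγ,n}⁺ ∘ γ₀`. -/

theorem Real.abs_log_le_two_mul_of_abs_sub_one_le {q t : ℝ} (h : |q - 1| ≤ t)
    (ht : t ≤ 1 / 2) : |Real.log q| ≤ 2 * t := by
  obtain ⟨h₁, h₂⟩ := abs_le.mp h
  have hq : 0 < q := by linarith
  have hinv : q⁻¹ ≤ 1 + 2 * t := by
    rw [inv_le_iff_one_le_mul₀ hq]
    nlinarith
  rw [abs_le]
  constructor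
  · linarith [Real.one_sub_inv_le_log_of_pos hq]
  · linarith [Real.log_le_sub_one_of_pos hq]

theorem abs_tsum_le_of_abs_le_geometric {a : ℕ → ℝ} {B : ℝ} (h : ∀ k, |a k| ≤ B * (1 / 2) ^ k) :
    |∑' k, a k| ≤ 2 * B := by
  rw [mul_comm]
  exact tsum_of_norm_bounded (hasSum_geometric_two.mul_left B) fun k =>
    (Real.norm_eq_abs _).trans_le (h k)

theorem summable_of_abs_le_geometric {a : ℕ → ℝ} {B : ℝ} (h : ∀ k, |a k| ≤ B * (1 / 2) ^ k) :
    Summable a :=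
  .of_norm_bounded (summable_geometric_two.mul_left B) fun k =>
    (Real.norm_eq_abs _).trans_le (h k)

theorem exists_forall_abs_lt_of_abs_le_div {α : Type*} {s : Set α} {u g : α → ℝ} {C : ℝ}
    (hC : 0 ≤ C) (h : ∀ x ∈ s, |u x| ≤ C / g x) :
    ∀ ε : ℝ, 0 < ε → ∃ T : ℝ, 0 < T ∧ ∀ x ∈ s, T < g x → |u x| < ε := by
  intro ε hε
  refine ⟨C / ε + 1, by positivity, fun x hx hT => (h x hx).trans_lt ?_⟩
  have hCε : C / ε < g x := by linarith
  have hg : 0 < g x := lt_of_le_of_lt (by positivity) hCε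
  rw [div_lt_iff₀ hε] at hCε
  rw [div_lt_iff₀ hg]
  linarith

structure HenonMap.CoeffBound (f : HenonMap) (D : ℕ) (M Δ m : ℝ) : Prop where
  natDegree_le : f.p.natDegree ≤ D
  norm_δ_le : ‖f.δ‖ ≤ Δ
  norm_coeff_le : ∀ i, ‖f.p.coeff i‖ ≤ M
  le_norm_leadingCoeff : m ≤ ‖f.p.leadingCoeff‖

theorem HenonMap.CoeffBound.mul_add_nonneg {f : HenonMap} {D : ℕ} {M Δ m : ℝ}
    (hf : f.CoeffBound D M Δ m) : 0 ≤ M * D + Δ := by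
  have := (norm_nonneg _).trans (hf.norm_coeff_le 0)
  have := (norm_nonneg _).trans hf.norm_δ_le
  positivity

theorem ParamBounded.exists_coeffBound {Γ : Set HenonMap} (hΓ : ParamBounded Γ) :
    ∃ (D : ℕ) (M Δ m : ℝ), 0 < m ∧ ∀ f ∈ Γ, f.CoeffBound D M Δ m := by
  obtain ⟨D, _, _, Δ, m, M, -, -, -, -, hm, -, hbound⟩ := hΓ
  refine ⟨D, M, Δ, m, hm, fun f hf => ?_⟩
  obtain ⟨hD, -, -, hΔ, hM, hc⟩ := hbound f hf
  exact ⟨hD, hΔ, hM, hc⟩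

namespace HenonMap

variable {f : HenonMap} {D : ℕ} {M Δ m : ℝ} {z : ℂ × ℂ}

theorem continuous_toFun (f : HenonMap) : Continuous f.toFun := by
  unfold toFun
  fun_prop

theorem leadingCoeff_ne_zero (f : HenonMap) : f.p.leadingCoeff ≠ 0 := by
  rw [Ne, Polynomial.leadingCoeff_eq_zero]
  rintro hp
  simpa [hp] using f.hdeg

theorem norm_snd_toFun_sub_le (hf : f.CoeffBound D M Δ m) (hx : ‖z.1‖ ≤ ‖z.2‖)
    (hy : 1 ≤ ‖z.2‖) :
    ‖(f.toFun z).2 - f.p.leadingCoeff * z.2 ^ f.p.natDegree‖ ≤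
      (M * D + Δ) * ‖z.2‖ ^ (f.p.natDegree - 1) := by
  set d := f.p.natDegree
  have hd : 2 ≤ d := f.hdeg
  have hM : 0 ≤ M := (norm_nonneg _).trans (hf.norm_coeff_le 0)
  have hexpand : (f.toFun z).2 - f.p.leadingCoeff * z.2 ^ d =
      (∑ i ∈ Finset.range d, f.p.coeff i * z.2 ^ i) - f.δ * z.1 := by
    simp only [toFun, Polynomial.eval_eq_sum_range, Finset.sum_range_succ,
      Polynomial.coeff_natDegree, d]
    ring
  have hlow : ∀ i ∈ Finset.range d, ‖f.p.coeff i * z.2 ^ i‖ ≤ M * ‖z.2‖ ^ (d - 1) :=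
    fun i hi => by
      rw [norm_mul, norm_pow]
      exact mul_le_mul (hf.norm_coeff_le i)
        (pow_le_pow_right₀ hy (Nat.le_sub_one_of_lt (Finset.mem_range.mp hi))) (by positivity) hM
  have hδx : ‖f.δ * z.1‖ ≤ Δ * ‖z.2‖ ^ (d - 1) := by
    rw [norm_mul]
    exact mul_le_mul hf.norm_δ_le (hx.trans (le_self_pow₀ hy (by omega))) (norm_nonneg _)
      ((norm_nonneg _).trans hf.norm_δ_le)
  have hdD : (d : ℝ) ≤ D := by exact_mod_cast hf.natDegree_le
  calc ‖(f.toFun z).2 - f.p.leadingCoeff * z.2 ^ d‖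
      ≤ ‖∑ i ∈ Finset.range d, f.p.coeff i * z.2 ^ i‖ + ‖f.δ * z.1‖ := by
        rw [hexpand]; exact norm_sub_le _ _
    _ ≤ d * (M * ‖z.2‖ ^ (d - 1)) + Δ * ‖z.2‖ ^ (d - 1) := by
        gcongr
        simpa using norm_sum_le_of_le _ hlow
    _ ≤ (M * D + Δ) * ‖z.2‖ ^ (d - 1) := by
        have : 0 ≤ M * ‖z.2‖ ^ (d - 1) := by positivity
        nlinarith

def logDefect (f : HenonMap) (z : ℂ × ℂ) : ℝ :=
  Real.log ‖(f.toFun z).2‖ - Real.log ‖f.p.leadingCoeff‖ - f.p.natDegree * Real.log ‖z.2‖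

theorem logDefect_eq_log_div (hY : (f.toFun z).2 ≠ 0) (hy : z.2 ≠ 0) :
    f.logDefect z =
      Real.log (‖(f.toFun z).2‖ / (‖f.p.leadingCoeff‖ * ‖z.2‖ ^ f.p.natDegree)) := by
  have hc : ‖f.p.leadingCoeff‖ ≠ 0 := norm_ne_zero_iff.mpr f.leadingCoeff_ne_zero
  rw [Real.log_div (norm_ne_zero_iff.mpr hY) (by positivity), Real.log_mul hc (by positivity),
    Real.log_pow, logDefect]
  ring

theorem abs_norm_div_sub_one_le (hm : 0 < m) (hf : f.CoeffBound D M Δ m)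
    (hx : ‖z.1‖ ≤ ‖z.2‖) (hy : 1 ≤ ‖z.2‖) :
    |‖(f.toFun z).2‖ / (‖f.p.leadingCoeff‖ * ‖z.2‖ ^ f.p.natDegree) - 1| ≤
      (M * D + Δ) / (m * ‖z.2‖) := by
  set d := f.p.natDegree
  have hc : 0 < ‖f.p.leadingCoeff‖ := hm.trans_le hf.le_norm_leadingCoeff
  have hy0 : 0 < ‖z.2‖ := one_pos.trans_le hy
  have hden : 0 < ‖f.p.leadingCoeff‖ * ‖z.2‖ ^ d := by positivity
  have hK := hf.mul_add_nonneg
  have hpow : ‖z.2‖ ^ d = ‖z.2‖ ^ (d - 1) * ‖z.2‖ := by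
    rw [← pow_succ, Nat.sub_add_cancel (by have := f.hdeg; omega)]
  calc |‖(f.toFun z).2‖ / (‖f.p.leadingCoeff‖ * ‖z.2‖ ^ d) - 1|
      = |‖(f.toFun z).2‖ - ‖f.p.leadingCoeff * z.2 ^ d‖| / (‖f.p.leadingCoeff‖ * ‖z.2‖ ^ d) := by
        rw [div_sub_one hden.ne', abs_div, abs_of_pos hden, norm_mul, norm_pow]
    _ ≤ (M * D + Δ) * ‖z.2‖ ^ (d - 1) / (‖f.p.leadingCoeff‖ * ‖z.2‖ ^ d) := by
        gcongr
        exact (abs_norm_sub_norm_le _ _).trans (norm_snd_toFun_sub_le hf hx hy)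
    _ = (M * D + Δ) / (‖f.p.leadingCoeff‖ * ‖z.2‖) := by
        rw [hpow]
        field_simp
    _ ≤ (M * D + Δ) / (m * ‖z.2‖) := by
        gcongr
        exact hf.le_norm_leadingCoeff

theorem logDefect_le (hm : 0 < m) (hf : f.CoeffBound D M Δ m) (hx : ‖z.1‖ ≤ ‖z.2‖)
    (hy : 1 ≤ ‖z.2‖) (hY : (f.toFun z).2 ≠ 0) : f.logDefect z ≤ (M * D + Δ) / m := by
  have hq := abs_le.mp (abs_norm_div_sub_one_le hm hf hx hy)
  have hq0 : 0 < ‖(f.toFun z).2‖ / (‖f.p.leadingCoeff‖ * ‖z.2‖ ^ f.p.natDegree) := by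
    have : 0 < ‖f.p.leadingCoeff‖ := norm_pos_iff.mpr f.leadingCoeff_ne_zero
    have : 0 < ‖z.2‖ := one_pos.trans_le hy
    have : 0 < ‖(f.toFun z).2‖ := norm_pos_iff.mpr hY
    positivity
  have hK : (M * D + Δ) / (m * ‖z.2‖) ≤ (M * D + Δ) / m := by
    rw [div_mul_eq_div_div]
    exact div_le_self (div_nonneg hf.mul_add_nonneg hm.le) hy
  rw [logDefect_eq_log_div hY (norm_pos_iff.mp (one_pos.trans_le hy))]
  linarith [Real.log_le_sub_one_of_pos hq0]

theorem abs_logDefect_le_of_le_norm_snd (hm : 0 < m) (hf : f.CoeffBound D M Δ m)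
    (hx : ‖z.1‖ ≤ ‖z.2‖) (hy : 1 ≤ ‖z.2‖) (hY : (f.toFun z).2 ≠ 0)
    (hfar : 2 * (M * D + Δ) / m ≤ ‖z.2‖) :
    |f.logDefect z| ≤ 2 * (M * D + Δ) / m / ‖z.2‖ := by
  have hy0 : 0 < ‖z.2‖ := one_pos.trans_le hy
  have ht : (M * D + Δ) / (m * ‖z.2‖) ≤ 1 / 2 := by
    rw [div_le_iff₀ (by positivity)]
    rw [div_le_iff₀ hm] at hfar
    linarith
  rw [logDefect_eq_log_div hY (norm_pos_iff.mp hy0)]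
  calc _ ≤ 2 * ((M * D + Δ) / (m * ‖z.2‖)) :=
        Real.abs_log_le_two_mul_of_abs_sub_one_le (abs_norm_div_sub_one_le hm hf hx hy) ht
    _ = 2 * (M * D + Δ) / m / ‖z.2‖ := by ring

/-- For large `|y|` this is the expansion `π₂ f(z) = c₀ yᵈ (1 + O(1/|y|))`; on the remaining
bounded range of `|y|` the hypothesis `1 ≤ |π₂ f(z)|` bounds the defect from below. -/
theorem exists_abs_logDefect_le_div (hm : 0 < m) :
    ∃ C, 0 ≤ C ∧ ∀ (f : HenonMap) (z : ℂ × ℂ), f.CoeffBound D M Δ m → ‖z.1‖ ≤ ‖z.2‖ →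
      1 ≤ ‖z.2‖ → 1 ≤ ‖(f.toFun z).2‖ → |f.logDefect z| ≤ C / ‖z.2‖ := by
  set K := M * D + Δ
  set W := max 1 (2 * K / m)
  set B := |K| / m + 1 + |Real.log M| + D * Real.log W with hB_def
  have hW : 1 ≤ W := le_max_left _ _
  have hK : 0 ≤ |K| / m := by positivity
  have hDW : 0 ≤ (D : ℝ) * Real.log W := by have := Real.log_nonneg hW; positivity
  have hB : 1 ≤ B := by linarith [abs_nonneg (Real.log M)]
  refine ⟨W * B, by positivity, fun f z hf hx hy hY => ?_⟩
  have hy0 : 0 < ‖z.2‖ := one_pos.trans_le hy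
  have hY0 : (f.toFun z).2 ≠ 0 := norm_pos_iff.mp (one_pos.trans_le hY)
  rw [le_div_iff₀ hy0]
  by_cases hfar : W ≤ ‖z.2‖
  · have h := abs_logDefect_le_of_le_norm_snd hm hf hx hy hY0 ((le_max_right _ _).trans hfar)
    rw [le_div_iff₀ hy0] at h
    nlinarith [le_max_right 1 (2 * K / m)]
  · push Not at hfar
    suffices |f.logDefect z| ≤ B by nlinarith [abs_nonneg (f.logDefect z)]
    have hc : ‖f.p.leadingCoeff‖ ≤ M := hf.norm_coeff_le _
    have hc0 : 0 < ‖f.p.leadingCoeff‖ := norm_pos_iff.mpr f.leadingCoeff_ne_zero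
    have hlogc : Real.log ‖f.p.leadingCoeff‖ ≤ |Real.log M| :=
      (Real.log_le_log hc0 hc).trans (le_abs_self _)
    have hlogy : (f.p.natDegree : ℝ) * Real.log ‖z.2‖ ≤ D * Real.log W :=
      mul_le_mul (by exact_mod_cast hf.natDegree_le) (Real.log_le_log hy0 hfar.le)
        (Real.log_nonneg hy) (Nat.cast_nonneg _)
    have hlogY : 0 ≤ Real.log ‖(f.toFun z).2‖ := Real.log_nonneg hY
    have hupper : f.logDefect z ≤ K / m := logDefect_le hm hf hx hy hY0
    have : K / m ≤ |K| / m := div_le_div_of_nonneg_right (le_abs_self K) hm.le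
    rw [abs_le]
    constructor
    · unfold logDefect
      linarith
    · linarith [abs_nonneg (Real.log M)]

theorem continuousOn_logDefect (f : HenonMap) :
    ContinuousOn f.logDefect {z | z.2 ≠ 0 ∧ (f.toFun z).2 ≠ 0} := by
  have hf := f.continuous_toFun
  unfold logDefect
  refine ContinuousOn.sub (ContinuousOn.sub ?_ continuousOn_const)
    (continuousOn_const.mul ?_)
  · exact (continuous_norm.comp (continuous_snd.comp hf)).continuousOn.log
      fun z hz => norm_ne_zero_iff.mpr hz.2
  · exact (continuous_norm.comp continuous_snd).continuousOn.log
      fun z hz => norm_ne_zero_iff.mpr hz.1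

end HenonMap

section VPlus

variable {R : ℝ} {z : ℂ × ℂ}

theorem norm_fst_lt_of_mem_vPlus (hz : z ∈ VPlus R) : ‖z.1‖ < ‖z.2‖ :=
  (le_max_right _ _).trans_lt hz

theorem lt_norm_snd_of_mem_vPlus (hz : z ∈ VPlus R) : R < ‖z.2‖ :=
  (le_max_left _ _).trans_lt hz

theorem norm_eq_norm_snd_of_mem_vPlus (hz : z ∈ VPlus R) : ‖z‖ = ‖z.2‖ := by
  rw [Prod.norm_def, max_eq_right (norm_fst_lt_of_mem_vPlus hz).le]

theorem one_lt_norm_snd_of_mem_vPlus (hR : 1 ≤ R) (hz : z ∈ VPlus R) : 1 < ‖z.2‖ :=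
  hR.trans_lt (lt_norm_snd_of_mem_vPlus hz)

end VPlus

section Orbits

variable {γ : ℤ → HenonMap} {z : ℂ × ℂ}

theorem continuous_fwd (γ : ℤ → HenonMap) (n : ℕ) : Continuous (fwd γ n) := by
  induction n with
  | zero => exact continuous_id
  | succ n ih => exact (γ n).continuous_toFun.comp ih

theorem fwd_succ' (γ : ℤ → HenonMap) (n : ℕ) (z : ℂ × ℂ) :
    fwd γ (n + 1) z = fwd (shiftIter γ 1) n ((γ 0).toFun z) := by
  induction n with
  | zero => rfl
  | succ n ih =>
    change (γ ((n + 1 : ℕ) : ℤ)).toFun (fwd γ (n + 1) z) = (shiftIter γ 1 n).toFun _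
    rw [ih, shiftIter]
    push_cast
    rfl

theorem fwd_mem_vPlus {R ρ : ℝ} (hρ : 1 ≤ ρ) (hA : ∀ k : ℕ, CondA (γ k) R ρ)
    (hz : z ∈ VPlus R) (n : ℕ) : fwd γ n z ∈ VPlus R ∧ ‖z.2‖ ≤ ‖(fwd γ n z).2‖ := by
  induction n with
  | zero => exact ⟨hz, le_rfl⟩
  | succ n ih =>
    obtain ⟨hmem, hgrow⟩ := (hA n).1 _ (subset_closure ih.1)
    refine ⟨hmem, ih.2.trans (le_of_lt ?_)⟩
    exact lt_of_le_of_lt (le_mul_of_one_le_left (norm_nonneg _) hρ) hgrow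

def degProd (γ : ℤ → HenonMap) (n : ℕ) : ℝ :=
  ∏ j ∈ Finset.range n, ((γ j).p.natDegree : ℝ)

theorem two_pow_le_degProd (γ : ℤ → HenonMap) (n : ℕ) : (2 : ℝ) ^ n ≤ degProd γ n := by
  calc (2 : ℝ) ^ n = ∏ _j ∈ Finset.range n, (2 : ℝ) := by simp
    _ ≤ degProd γ n :=
      Finset.prod_le_prod (fun _ _ => zero_le_two) fun j _ => by exact_mod_cast (γ j).hdeg

theorem degProd_pos (γ : ℤ → HenonMap) (n : ℕ) : 0 < degProd γ n :=
  (pow_pos two_pos n).trans_le (two_pow_le_degProd γ n)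

theorem degProd_succ (γ : ℤ → HenonMap) (n : ℕ) :
    degProd γ (n + 1) = degProd γ n * (γ n).p.natDegree :=
  Finset.prod_range_succ _ _

theorem degProd_succ' (γ : ℤ → HenonMap) (n : ℕ) :
    degProd γ (n + 1) = (γ 0).p.natDegree * degProd (shiftIter γ 1) n := by
  simp only [degProd, Finset.prod_range_succ', shiftIter]
  push_cast
  ring

theorem abs_inv_degProd_succ_mul_le (γ : ℤ → HenonMap) (k : ℕ) {b B : ℝ} (hb : |b| ≤ B) :
    |(degProd γ (k + 1))⁻¹ * b| ≤ B * (1 / 2) ^ k := by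
  have hpos := degProd_pos γ (k + 1)
  have hinv : (degProd γ (k + 1))⁻¹ ≤ (1 / 2) ^ k := by
    rw [one_div, inv_pow]
    refine inv_anti₀ (by positivity) ((pow_le_pow_right₀ one_le_two k.le_succ).trans ?_)
    exact two_pow_le_degProd γ (k + 1)
  rw [abs_mul, abs_inv, abs_of_pos hpos, mul_comm]
  exact mul_le_mul hb hinv (by positivity) ((abs_nonneg b).trans hb)

theorem GPlusN_succ' (γ : ℤ → HenonMap) (n : ℕ) (z : ℂ × ℂ) :
    GPlusN γ (n + 1) z =
      ((γ 0).p.natDegree : ℝ)⁻¹ * GPlusN (shiftIter γ 1) n ((γ 0).toFun z) := by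
  change (degProd γ (n + 1))⁻¹ * _ = _ * ((degProd (shiftIter γ 1) n)⁻¹ * _)
  rw [fwd_succ', degProd_succ', mul_inv, mul_assoc]

theorem eq_inv_mul_of_tendsto_GPlusN {g g' : ℝ}
    (h : Tendsto (fun n => GPlusN γ n z) atTop (𝓝 g))
    (h' : Tendsto (fun n => GPlusN (shiftIter γ 1) n ((γ 0).toFun z)) atTop (𝓝 g')) :
    g = ((γ 0).p.natDegree : ℝ)⁻¹ * g' := by
  refine tendsto_nhds_unique ((tendsto_add_atTop_iff_nat 1).mpr h) ?_
  simpa only [GPlusN_succ'] using h'.const_mul _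

theorem GPlusN_eq_of_mem_vPlus {R : ℝ} (hR : 1 ≤ R) {n : ℕ} (h : fwd γ n z ∈ VPlus R) :
    GPlusN γ n z = (degProd γ n)⁻¹ * Real.log ‖(fwd γ n z).2‖ := by
  rw [GPlusN, norm_eq_norm_snd_of_mem_vPlus h, logPlus,
    max_eq_left (Real.log_nonneg (one_lt_norm_snd_of_mem_vPlus hR h).le)]
  rfl

end Orbits

section Expansion

variable {γ : ℤ → HenonMap} {D : ℕ} {M Δ m R ρ : ℝ} {z : ℂ × ℂ}

def leadTerm (γ : ℤ → HenonMap) (k : ℕ) : ℝ :=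
  (degProd γ (k + 1))⁻¹ * Real.log ‖(γ k).p.leadingCoeff‖

def defectTerm (γ : ℤ → HenonMap) (k : ℕ) (z : ℂ × ℂ) : ℝ :=
  (degProd γ (k + 1))⁻¹ * (γ k).logDefect (fwd γ k z)

def rPlus (γ : ℤ → HenonMap) : ℝ := ∑' k, leadTerm γ k

def uPlus (γ : ℤ → HenonMap) (z : ℂ × ℂ) : ℝ := ∑' k, defectTerm γ k z

theorem leadTerm_add_defectTerm (γ : ℤ → HenonMap) (k : ℕ) (z : ℂ × ℂ) :
    leadTerm γ k + defectTerm γ k z =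
      (degProd γ (k + 1))⁻¹ * Real.log ‖(fwd γ (k + 1) z).2‖ -
        (degProd γ k)⁻¹ * Real.log ‖(fwd γ k z).2‖ := by
  have hP := (degProd_pos γ k).ne'
  have hd : ((γ k).p.natDegree : ℝ) ≠ 0 := by have := (γ k).hdeg; positivity
  rw [leadTerm, defectTerm, HenonMap.logDefect, degProd_succ]
  change _ = _ * Real.log ‖((γ k).toFun (fwd γ k z)).2‖ - _
  field_simp
  ring

theorem GPlusN_eq_log_add_sum (hR : 1 ≤ R) {n : ℕ} (h : fwd γ n z ∈ VPlus R) :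
    GPlusN γ n z =
      Real.log ‖z.2‖ + ∑ k ∈ Finset.range n, (leadTerm γ k + defectTerm γ k z) := by
  simp_rw [GPlusN_eq_of_mem_vPlus hR h, leadTerm_add_defectTerm,
    Finset.sum_range_sub (fun k => (degProd γ k)⁻¹ * Real.log ‖(fwd γ k z).2‖)]
  simp [degProd, fwd]

theorem abs_leadTerm_le (hm : 0 < m) (hγ : ∀ k : ℕ, (γ k).CoeffBound D M Δ m) (k : ℕ) :
    |leadTerm γ k| ≤ (|Real.log m| + |Real.log M|) * (1 / 2) ^ k := by
  refine abs_inv_degProd_succ_mul_le γ k (abs_le.mpr ⟨?_, ?_⟩)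
  · have := Real.log_le_log hm (hγ k).le_norm_leadingCoeff
    linarith [neg_abs_le (Real.log m), abs_nonneg (Real.log M)]
  · have := Real.log_le_log (norm_pos_iff.mpr (γ k).leadingCoeff_ne_zero)
      ((hγ k).norm_coeff_le (γ k).p.natDegree)
    linarith [le_abs_self (Real.log M), abs_nonneg (Real.log m)]

theorem exists_abs_defectTerm_le (hm : 0 < m) (hR : 1 ≤ R) (hρ : 1 ≤ ρ)
    (hγ : ∀ k : ℕ, (γ k).CoeffBound D M Δ m) (hA : ∀ k : ℕ, CondA (γ k) R ρ) :
    ∃ C, 0 ≤ C ∧ ∀ z ∈ VPlus R, ∀ k, |defectTerm γ k z| ≤ C / ‖z.2‖ * (1 / 2) ^ k := by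
  obtain ⟨C, hC0, hC⟩ := HenonMap.exists_abs_logDefect_le_div (D := D) (M := M) (Δ := Δ) hm
  refine ⟨C, hC0, fun z hz k => abs_inv_degProd_succ_mul_le γ k ?_⟩
  obtain ⟨hmem, hgrow⟩ := fwd_mem_vPlus hρ hA hz k
  calc |(γ k).logDefect (fwd γ k z)| ≤ C / ‖(fwd γ k z).2‖ :=
        hC _ _ (hγ k) (norm_fst_lt_of_mem_vPlus hmem).le
          (one_lt_norm_snd_of_mem_vPlus hR hmem).le
          (one_lt_norm_snd_of_mem_vPlus hR (fwd_mem_vPlus hρ hA hz (k + 1)).1).le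
    _ ≤ C / ‖z.2‖ := by
        gcongr
        exact one_pos.trans (one_lt_norm_snd_of_mem_vPlus hR hz)

theorem exists_abs_uPlus_le (hm : 0 < m) (hR : 1 ≤ R) (hρ : 1 ≤ ρ)
    (hγ : ∀ k : ℕ, (γ k).CoeffBound D M Δ m) (hA : ∀ k : ℕ, CondA (γ k) R ρ) :
    ∃ C, 0 ≤ C ∧ ∀ z ∈ VPlus R, |uPlus γ z| ≤ C / ‖z.2‖ := by
  obtain ⟨C, hC0, hC⟩ := exists_abs_defectTerm_le hm hR hρ hγ hA
  refine ⟨2 * C, by positivity, fun z hz => ?_⟩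
  rw [mul_div_assoc]
  exact abs_tsum_le_of_abs_le_geometric (hC z hz)

theorem continuousOn_uPlus (hm : 0 < m) (hR : 1 ≤ R) (hρ : 1 ≤ ρ)
    (hγ : ∀ k : ℕ, (γ k).CoeffBound D M Δ m) (hA : ∀ k : ℕ, CondA (γ k) R ρ) :
    ContinuousOn (uPlus γ) (VPlus R) := by
  obtain ⟨C, hC0, hC⟩ := exists_abs_defectTerm_le hm hR hρ hγ hA
  have hsnd_ne : ∀ {w}, w ∈ VPlus R → w.2 ≠ 0 := fun hw =>
    norm_pos_iff.mp (one_pos.trans (one_lt_norm_snd_of_mem_vPlus hR hw))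
  refine continuousOn_tsum (fun k => continuousOn_const.mul ?_)
    (summable_geometric_two.mul_left C) fun k z hz => ?_
  · refine (γ k).continuousOn_logDefect.comp (continuous_fwd γ k).continuousOn fun z hz => ?_
    exact ⟨hsnd_ne (fwd_mem_vPlus hρ hA hz k).1, hsnd_ne (fwd_mem_vPlus hρ hA hz (k + 1)).1⟩
  · refine (Real.norm_eq_abs _).trans_le ((hC z hz k).trans ?_)
    gcongr
    exact div_le_self hC0 (one_lt_norm_snd_of_mem_vPlus hR hz).le

theorem tendsto_GPlusN_of_mem_vPlus (hm : 0 < m) (hR : 1 ≤ R) (hρ : 1 ≤ ρ)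
    (hγ : ∀ k : ℕ, (γ k).CoeffBound D M Δ m) (hA : ∀ k : ℕ, CondA (γ k) R ρ)
    (hz : z ∈ VPlus R) :
    Tendsto (fun n => GPlusN γ n z) atTop (𝓝 (Real.log ‖z.2‖ + rPlus γ + uPlus γ z)) := by
  obtain ⟨C, -, hC⟩ := exists_abs_defectTerm_le hm hR hρ hγ hA
  have hsum := (summable_of_abs_le_geometric (abs_leadTerm_le hm hγ)).hasSum.add
    (summable_of_abs_le_geometric (hC z hz)).hasSum
  rw [add_assoc]
  simpa only [GPlusN_eq_log_add_sum hR (fwd_mem_vPlus hρ hA hz _).1, rPlus, uPlus] using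
    hsum.tendsto_sum_nat.const_add (Real.log ‖z.2‖)

end Expansion

theorem stmt_12_general (Γ : Set HenonMap) (hΓ : ParamBounded Γ)
    (R ρ : ℝ) (hR : 1 < R) (hρ : 1 < ρ) (hA : ∀ h ∈ Γ, CondA h R ρ)
    (G : (ℤ → HenonMap) → (ℂ × ℂ) → ℝ)
    (hG : ∀ γ : ℤ → HenonMap, (∀ j : ℤ, γ j ∈ Γ) → ∀ z : ℂ × ℂ,
      Filter.Tendsto (fun n : ℕ => GPlusN γ n z) Filter.atTop (nhds (G γ z))) :
    (∀ γ : ℤ → HenonMap, (∀ j : ℤ, γ j ∈ Γ) → ∀ z : ℂ × ℂ,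
      G γ z = (((γ 0).p.natDegree : ℝ))⁻¹ * G (shiftIter γ 1) ((γ 0).toFun z)) ∧
    (∀ γ : ℤ → HenonMap, (∀ j : ℤ, γ j ∈ Γ) →
      ∃ (r : ℝ) (u : ℂ × ℂ → ℝ),
        ContinuousOn u (VPlus R) ∧
        (∃ C : ℝ, ∀ z ∈ VPlus R, |u z| ≤ C) ∧
        (∀ z ∈ VPlus R, G γ z = Real.log (‖z.2‖) + r + u z) ∧
        (∀ ε : ℝ, 0 < ε → ∃ T : ℝ, 0 < T ∧
          ∀ z ∈ VPlus R, T < ‖z.2‖ → |u z| < ε)) := by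
  obtain ⟨D, M, Δ, m, hm, hbound⟩ := hΓ.exists_coeffBound
  refine ⟨fun γ hγ z => eq_inv_mul_of_tendsto_GPlusN (hG γ hγ z) (hG _ (fun j => hγ _) _),
    fun γ hγ => ?_⟩
  have hγ' : ∀ k : ℕ, (γ k).CoeffBound D M Δ m := fun k => hbound _ (hγ k)
  have hA' : ∀ k : ℕ, CondA (γ k) R ρ := fun k => hA _ (hγ k)
  obtain ⟨C, hC0, hC⟩ := exists_abs_uPlus_le hm hR.le hρ.le hγ' hA'
  refine ⟨rPlus γ, uPlus γ, continuousOn_uPlus hm hR.le hρ.le hγ' hA', ⟨C, fun z hz => ?_⟩,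
    fun z hz => ?_, exists_forall_abs_lt_of_abs_le_div hC0 hC⟩
  · exact (hC z hz).trans (div_le_self hC0 (one_lt_norm_snd_of_mem_vPlus hR.le hz).le)
  · exact tendsto_nhds_unique (hG γ hγ z)
      (tendsto_GPlusN_of_mem_vPlus hm hR.le hρ.le hγ' hA' hz)

/-- the functional equation for `G_γ⁺` and its expansion
`G_γ⁺ = log|y| + r_γ⁺ + u_γ⁺` on `V_R⁺` with `u_γ⁺` bounded, continuous, vanishing at
infinity. -/
theorem stmt_12 (Γ : Set HenonMap) (hne : Γ.Nonempty) (hΓ : ParamBounded Γ)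
    (R ρ : ℝ) (hR : 1 < R) (hρ : 1 < ρ) (hA : ∀ h ∈ Γ, CondA h R ρ)
    (G : (ℤ → HenonMap) → (ℂ × ℂ) → ℝ)
    (hG : ∀ γ : ℤ → HenonMap, (∀ j : ℤ, γ j ∈ Γ) → ∀ z : ℂ × ℂ,
      Filter.Tendsto (fun n : ℕ => GPlusN γ n z) Filter.atTop (nhds (G γ z))) :
    (∀ γ : ℤ → HenonMap, (∀ j : ℤ, γ j ∈ Γ) → ∀ z : ℂ × ℂ,
      G γ z = (((γ 0).p.natDegree : ℝ))⁻¹ * G (shiftIter γ 1) ((γ 0).toFun z)) ∧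
    (∀ γ : ℤ → HenonMap, (∀ j : ℤ, γ j ∈ Γ) →
      ∃ (r : ℝ) (u : ℂ × ℂ → ℝ),
        ContinuousOn u (VPlus R) ∧
        (∃ C : ℝ, ∀ z ∈ VPlus R, |u z| ≤ C) ∧
        (∀ z ∈ VPlus R, G γ z = Real.log (‖z.2‖) + r + u z) ∧
        (∀ ε : ℝ, 0 < ε → ∃ T : ℝ, 0 < T ∧
          ∀ z ∈ VPlus R, T < ‖z.2‖ → |u z| < ε)) :=
  stmt_12_general Γ hΓ R ρ hR hρ hA G hG
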